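/- arXiv:2409.03191 — 2 statements merged into one kernel-verified Lean document; each statement's English description precedes it below -/
import Mathlib

section
/- Let a, b, d, α > 0 with a²/4 > b and c₁ = a/2 + √(a²/4 − b). Then the function Φ₁(p) = d·p² + c₁²·α²/(p² + α²) − b satisfies Φ₁(p) ≥ 0 for all p ∈ ℝ if and only if d ≥ (c₁ − √(c₁² − b))²/α². -/
/-!
Multiplying `Φ₁(p)` by `p² + α²` and writing `s = √(c₁² - b)` turns it into the quadratic
`d q² + (dα² - b) q + α² s²` in `q = p² ≥ 0`, which is nonnegative on `[0, ∞)` iff its linear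
coefficient is at least `-2 √d α s`. Since `c₁² = b + s²`, that condition reads
`c₁ ≤ √d α + s`, i.e. `(c₁ - s)² ≤ d α²`.
-/

theorem forall_sq_iff_forall_nonneg {P : ℝ → Prop} :
    (∀ p : ℝ, P (p ^ 2)) ↔ ∀ q : ℝ, 0 ≤ q → P q :=
  ⟨fun h q hq => by simpa [Real.sq_sqrt hq] using h (Real.sqrt q),
    fun h p => h _ (sq_nonneg p)⟩

theorem forall_nonneg_quadratic_nonneg_iff {u v B : ℝ} (hu : 0 < u) (hv : 0 ≤ v) :
    (∀ q : ℝ, 0 ≤ q → 0 ≤ u ^ 2 * q ^ 2 + B * q + v ^ 2) ↔ -B ≤ 2 * u * v := by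
  constructor
  · intro h
    by_contra! hlt
    have huv : 0 ≤ 2 * u * v := by positivity
    -- evaluate at the vertex `q = -B / (2u²)`
    have hvertex := h (-B / (2 * u ^ 2)) (div_nonneg (by linarith) (by positivity))
    have hval : u ^ 2 * (-B / (2 * u ^ 2)) ^ 2 + B * (-B / (2 * u ^ 2)) + v ^ 2
        = ((2 * u * v) ^ 2 - B ^ 2) / (4 * u ^ 2) := by
      field_simp; ring
    rw [hval, div_nonneg_iff] at hvertex
    have hsq : (2 * u * v) ^ 2 < B ^ 2 := by nlinarith
    rcases hvertex with ⟨hnum, -⟩ | ⟨-, hden⟩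
    · linarith
    · nlinarith
  · intro h q hq
    nlinarith [sq_nonneg (u * q - v), mul_le_mul_of_nonneg_right h hq]

theorem sub_sqrt_sq_le_sq_iff {b c r : ℝ} (hb : 0 ≤ b) (hc : 0 ≤ c) (hbc : b ≤ c ^ 2)
    (hr : 0 ≤ r) :
    (c - Real.sqrt (c ^ 2 - b)) ^ 2 ≤ r ^ 2 ↔ b - r ^ 2 ≤ 2 * r * Real.sqrt (c ^ 2 - b) := by
  set s := Real.sqrt (c ^ 2 - b)
  have hs : 0 ≤ s := Real.sqrt_nonneg _
  have hs2 : s ^ 2 = c ^ 2 - b := Real.sq_sqrt (sub_nonneg.2 hbc)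
  have hsc : s ≤ c := by nlinarith
  calc (c - s) ^ 2 ≤ r ^ 2 ↔ c - s ≤ r := pow_le_pow_iff_left₀ (sub_nonneg.2 hsc) hr two_ne_zero
    _ ↔ c ^ 2 ≤ (r + s) ^ 2 := by
      rw [pow_le_pow_iff_left₀ hc (by positivity) two_ne_zero, sub_le_iff_le_add]
    _ ↔ b - r ^ 2 ≤ 2 * r * s := by constructor <;> intro h <;> nlinarith

theorem lt_sq_half_add_sqrt {a b : ℝ} (ha : 0 < a) (hab : b < a ^ 2 / 4) :
    b < (a / 2 + Real.sqrt (a ^ 2 / 4 - b)) ^ 2 := by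
  have ht : 0 < Real.sqrt (a ^ 2 / 4 - b) := Real.sqrt_pos.2 (by linarith)
  nlinarith [Real.sq_sqrt (by linarith : (0 : ℝ) ≤ a ^ 2 / 4 - b), mul_pos ha ht]

theorem stmt_6 (a b d α : ℝ) (ha : 0 < a) (hb : 0 < b) (hd : 0 < d) (hα : 0 < α)
    (hab : a ^ 2 / 4 > b)
    (c₁ : ℝ) (hc₁ : c₁ = a / 2 + Real.sqrt (a ^ 2 / 4 - b)) :
    (∀ p : ℝ, 0 ≤ d * p ^ 2 + c₁ ^ 2 * α ^ 2 / (p ^ 2 + α ^ 2) - b) ↔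
      d ≥ (c₁ - Real.sqrt (c₁ ^ 2 - b)) ^ 2 / α ^ 2 := by
  have hbc : b < c₁ ^ 2 := hc₁ ▸ lt_sq_half_add_sqrt ha hab
  have hc : 0 < c₁ := by rw [hc₁]; positivity
  set s := Real.sqrt (c₁ ^ 2 - b)
  have hα2 : 0 < α ^ 2 := by positivity
  have hΦ : ∀ p : ℝ, d * p ^ 2 + c₁ ^ 2 * α ^ 2 / (p ^ 2 + α ^ 2) - b
      = (Real.sqrt d ^ 2 * (p ^ 2) ^ 2 + (d * α ^ 2 - b) * p ^ 2 + (α * s) ^ 2)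
        / (p ^ 2 + α ^ 2) := by
    intro p
    rw [Real.sq_sqrt hd.le, mul_pow, Real.sq_sqrt (sub_nonneg.2 hbc.le)]
    field_simp
    ring
  calc (∀ p : ℝ, 0 ≤ d * p ^ 2 + c₁ ^ 2 * α ^ 2 / (p ^ 2 + α ^ 2) - b)
      ↔ ∀ p : ℝ, 0 ≤ Real.sqrt d ^ 2 * (p ^ 2) ^ 2 + (d * α ^ 2 - b) * p ^ 2 + (α * s) ^ 2 :=
        forall_congr' fun p => by
          rw [hΦ, le_div_iff₀ (by positivity), zero_mul]
    _ ↔ -(d * α ^ 2 - b) ≤ 2 * Real.sqrt d * (α * s) :=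
        forall_sq_iff_forall_nonneg.trans
          (forall_nonneg_quadratic_nonneg_iff (Real.sqrt_pos.2 hd) (by positivity))
    _ ↔ (c₁ - s) ^ 2 ≤ (Real.sqrt d * α) ^ 2 := by
        rw [sub_sqrt_sq_le_sq_iff hb.le hc.le hbc.le (by positivity), mul_pow,
          Real.sq_sqrt hd.le]
        constructor <;> intro h <;> linarith
    _ ↔ d ≥ (c₁ - s) ^ 2 / α ^ 2 := by
        rw [mul_pow, Real.sq_sqrt hd.le, ge_iff_le, div_le_iff₀ hα2]
end

section
/- Let a, b, d, α > 0 with a²/4 > b, c₁ = a/2 + √(a²/4 − b), and let x* ∈ (0, b) be the unique zero of f(x) = 27c₁²x² − (b + 2x)³ on (0, b). Then the function Φ₁(p) = d·|p|² + c₁²·α⁴/(α² + |p|²)² − b on ℝ³ satisfies Φ₁(p) ≥ 0 for all p ∈ ℝ³ if and only if d ≥ 2x*/α². -/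
/-!
Writing `t = |p|²`, the symbol is `φ(t) = d t + C α⁴/(α² + t)² - b` with `C = c₁²`, and the
relation `27 C x*² = (b + 2x*)³` says exactly that at `t₀ = α²(b - x*)/(3x*)` the potential term
equals `(b + 2x*)/3`, so `φ(t₀) = (b - x*)/(3x*) · (dα² - 2x*)`; this gives necessity.
For sufficiency, at the threshold `dα² = 2x*` the cleared numerator of `φ` factors as
`(3x*t - α²(b - x*))² (6x*t + α²(8x* + b))`, a double root at `t₀` times a positive factor.
-/

theorem forall_norm_sq_iff {E : Type*} [NormedAddCommGroup E] [NormedSpace ℝ E] [Nontrivial E]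
    (P : ℝ → Prop) : (∀ p : E, P (‖p‖ ^ 2)) ↔ ∀ t, 0 ≤ t → P t := by
  refine ⟨fun h t ht => ?_, fun h p => h _ (sq_nonneg _)⟩
  obtain ⟨p, hp⟩ := exists_norm_eq E (Real.sqrt_nonneg t)
  simpa [hp, Real.sq_sqrt ht] using h p

noncomputable def radialSymbol (d C α b t : ℝ) : ℝ := d * t + C * α ^ 4 / (α ^ 2 + t) ^ 2 - b

section

variable {d C α b x : ℝ}

theorem radialSymbol_critical (hα : α ≠ 0) (hx : x ≠ 0) (hbx : b + 2 * x ≠ 0)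
    (hC : 27 * C * x ^ 2 = (b + 2 * x) ^ 3) :
    radialSymbol d C α b (α ^ 2 * (b - x) / (3 * x)) = (b - x) / (3 * x) * (d * α ^ 2 - 2 * x) := by
  have hsum : α ^ 2 + α ^ 2 * (b - x) / (3 * x) = α ^ 2 * (b + 2 * x) / (3 * x) := by
    field_simp; ring
  have hpotential : C * α ^ 4 / (α ^ 2 * (b + 2 * x) / (3 * x)) ^ 2 = (b + 2 * x) / 3 := by
    rw [div_eq_iff (by positivity)]
    field_simp
    linear_combination hC
  unfold radialSymbol
  rw [hsum, hpotential]
  field_simp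
  ring

theorem le_of_radialSymbol_nonneg (hα : α ≠ 0) (hx : 0 < x) (hxb : x < b)
    (hC : 27 * C * x ^ 2 = (b + 2 * x) ^ 3)
    (h : 0 ≤ radialSymbol d C α b (α ^ 2 * (b - x) / (3 * x))) : 2 * x ≤ d * α ^ 2 := by
  rw [radialSymbol_critical hα hx.ne' (by linarith) hC] at h
  have hpos : 0 < (b - x) / (3 * x) := div_pos (by linarith) (by positivity)
  linarith [(mul_nonneg_iff_of_pos_left hpos).1 h]

theorem radialSymbol_nonneg {t : ℝ} (hα : α ≠ 0) (hx : 0 < x) (hb : 0 ≤ b)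
    (hC : 27 * C * x ^ 2 = (b + 2 * x) ^ 3) (hd : 2 * x ≤ d * α ^ 2) (ht : 0 ≤ t) :
    0 ≤ radialSymbol d C α b t := by
  have hden : 0 < (α ^ 2 + t) ^ 2 := by positivity
  have hcleared : radialSymbol d C α b t * (α ^ 2 + t) ^ 2
      = d * t * (α ^ 2 + t) ^ 2 + C * α ^ 4 - b * (α ^ 2 + t) ^ 2 := by
    unfold radialSymbol; field_simp
  have hfactor : 27 * x ^ 2 * α ^ 2 * (radialSymbol d C α b t * (α ^ 2 + t) ^ 2)
      = (3 * x * t - α ^ 2 * (b - x)) ^ 2 * (6 * x * t + α ^ 2 * (8 * x + b))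
        + 27 * x ^ 2 * t * (α ^ 2 + t) ^ 2 * (d * α ^ 2 - 2 * x) := by
    rw [hcleared]; linear_combination α ^ 6 * hC
  have hscaled : 0 ≤ 27 * x ^ 2 * α ^ 2 * (radialSymbol d C α b t * (α ^ 2 + t) ^ 2) := by
    rw [hfactor]
    have hgap : 0 ≤ d * α ^ 2 - 2 * x := by linarith
    positivity
  exact (mul_nonneg_iff_of_pos_right hden).1 ((mul_nonneg_iff_of_pos_left (by positivity)).1 hscaled)

end

theorem stmt_15_general (b d α : ℝ) (hα : 0 < α)
    (c₁ : ℝ)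
    (xs : ℝ) (hxs : xs ∈ Set.Ioo (0 : ℝ) b)
    (hzero : 27 * c₁ ^ 2 * xs ^ 2 - (b + 2 * xs) ^ 3 = 0) :
    (∀ p : EuclideanSpace ℝ (Fin 3),
        0 ≤ d * ‖p‖ ^ 2 + c₁ ^ 2 * α ^ 4 / (α ^ 2 + ‖p‖ ^ 2) ^ 2 - b) ↔
      d ≥ 2 * xs / α ^ 2 := by
  obtain ⟨hx, hxb⟩ := hxs
  have hC : 27 * c₁ ^ 2 * xs ^ 2 = (b + 2 * xs) ^ 3 := sub_eq_zero.1 hzero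
  rw [ge_iff_le, div_le_iff₀ (by positivity)]
  refine (forall_norm_sq_iff (fun t => 0 ≤ radialSymbol d (c₁ ^ 2) α b t)).trans ⟨fun h => ?_, ?_⟩
  · exact le_of_radialSymbol_nonneg hα.ne' hx hxb hC (h _ (by positivity))
  · exact fun hd t ht => radialSymbol_nonneg hα.ne' hx (by linarith) hC hd ht

theorem stmt_15 (a b d α : ℝ) (ha : 0 < a) (hb : 0 < b) (hd : 0 < d) (hα : 0 < α)
    (hab : a ^ 2 / 4 > b)
    (c₁ : ℝ) (hc₁ : c₁ = a / 2 + Real.sqrt (a ^ 2 / 4 - b))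
    (xs : ℝ) (hxs : xs ∈ Set.Ioo (0 : ℝ) b)
    (hzero : 27 * c₁ ^ 2 * xs ^ 2 - (b + 2 * xs) ^ 3 = 0)
    (huniq : ∀ x ∈ Set.Ioo (0 : ℝ) b,
      27 * c₁ ^ 2 * x ^ 2 - (b + 2 * x) ^ 3 = 0 → x = xs) :
    (∀ p : EuclideanSpace ℝ (Fin 3),
        0 ≤ d * ‖p‖ ^ 2 + c₁ ^ 2 * α ^ 4 / (α ^ 2 + ‖p‖ ^ 2) ^ 2 - b) ↔
      d ≥ 2 * xs / α ^ 2 :=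
  stmt_15_general b d α hα c₁ xs hxs hzero
end
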